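/- Let σ satisfy: for every ε > 0 there is a finite ReLU combination g(x) = ∑_{k=1}^K ā_k ReLU(w̄_k x + b̄_k) with sup_{x∈ℝ}|σ(x) − g(x)| ≤ ε and ∑_k |ā_k|(|w̄_k|+|b̄_k|) ≤ γ. Let ℱ_Q be the class of G-averaged shallow networks f(x) = (1/(m|G|)) ∑_{i=1}^m a_i ∑_{g∈G} σ(w_i·gx + b_i) with path norm (1/m)∑_i (|a_i|(‖w_i‖₁+|b_i|+1))² ≤ Q². Then for any sample S of size M in Ω ⊆ {‖x‖_∞ ≤ 1} with ‖gx‖_∞ ≤ 1 for all g, R̂_S(ℱ_Q) ≤ 4 γ Q √(log(2d+2)/M). -/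

import Mathlib

open Finset Real

/-- Empirical Rademacher complexity on a sample `x : Fin M → Ω`. -/
noncomputable def empRad {Ω : Type*} {M : ℕ} (F : Set (Ω → ℝ)) (x : Fin M → Ω) : ℝ :=
  (M : ℝ)⁻¹ * ((2 ^ M : ℝ)⁻¹ * ∑ ξ : Fin M → Bool,
    sSup ((fun f : Ω → ℝ => ∑ i, (if ξ i then (1 : ℝ) else -1) * f (x i)) '' F))

/-- The class `ℱ_Q` of `G`-averaged shallow `σ`-networks with path norm
`(1/m)∑ (|a_i|(‖w_i‖₁+|b_i|+1))² ≤ Q²`. -/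
def sigmaClassG {d : ℕ} (G : Type*) [Group G] [Fintype G] [MulAction G (Fin d → ℝ)]
    (σ : ℝ → ℝ) (Q : ℝ) : Set ((Fin d → ℝ) → ℝ) :=
  {h | ∃ (m : ℕ) (_ : 1 ≤ m) (a : Fin m → ℝ) (w : Fin m → Fin d → ℝ) (b : Fin m → ℝ),
    ((m : ℝ)⁻¹ * ∑ i, (|a i| * ((∑ j, |w i j|) + |b i| + 1)) ^ 2) ≤ Q ^ 2 ∧
    h = fun z => (m : ℝ)⁻¹ * ∑ i, a i * ((Fintype.card G : ℝ)⁻¹ *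
      ∑ g : G, σ ((∑ j, w i j * (g • z) j) + b i))}

/-!
Fix a sign pattern `ξ` and replace `σ` by a ReLU combination within `ε`. Each ReLU
`t ↦ max (w̄ t + b̄) 0` composed with a neuron `z ↦ w ⬝ᵥ g z + b` is again a ReLU neuron on the
augmented point `(g z, 1)`, with `ℓ¹` weight at most `(|w̄| + |b̄|) (‖w‖₁ + |b| + 1)`. By positive
homogeneity of the ReLU, the correlation of a network with `ξ` is then at most `γ` times the
averaged path weight (at most `Q` by Cauchy–Schwarz) times the largest correlation of a ReLU
neuron of unit `ℓ¹` weight with `±ξ`. Averaged over `ξ`, the contraction principle removes the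
ReLU, a linear functional on the `ℓ¹` ball is maximised at one of the `2d + 2` vertices, and
Massart's lemma bounds that finite maximum by `√(2 M log (2d + 2))`.
-/

open scoped BigOperators

lemma inv_card_mul_sum_eq_expect {α : Type*} [Fintype α] (f : α → ℝ) :
    (Fintype.card α : ℝ)⁻¹ * ∑ x, f x = 𝔼 x, f x := by
  rw [Fintype.expect_eq_sum_div_card, inv_mul_eq_div]

lemma expect_le_of_expect_sq_le {α : Type*} [Fintype α] [Nonempty α] {c : α → ℝ} {Q : ℝ}
    (hQ : 0 ≤ Q) (h : 𝔼 x, c x ^ 2 ≤ Q ^ 2) : 𝔼 x, c x ≤ Q := by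
  have hcs := expect_mul_sq_le_sq_mul_sq univ c fun _ => 1
  simp only [mul_one, one_pow, Fintype.expect_const] at hcs
  exact (le_abs_self _).trans (abs_le_of_sq_le_sq (hcs.trans h) hQ)

lemma exp_expect_le_expect_exp {α : Type*} [Fintype α] [Nonempty α] (f : α → ℝ) :
    exp (𝔼 x, f x) ≤ 𝔼 x, exp (f x) := by
  have hw : ∑ _x : α, (Fintype.card α : ℝ)⁻¹ = 1 := by simp
  simpa [Fintype.expect_eq_sum_div_card, div_eq_inv_mul, mul_sum] using
    convexOn_exp.map_sum_le (t := univ) (w := fun _ => (Fintype.card α : ℝ)⁻¹) (p := f)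
      (fun _ _ => by positivity) hw (fun _ _ => Set.mem_univ _)

lemma expect_le_expect_of_add_comp_perm_le {α : Type*} [Fintype α] {f g : α → ℝ}
    (e : Equiv.Perm α) (h : ∀ x, f x + f (e x) ≤ g x + g (e x)) : 𝔼 x, f x ≤ 𝔼 x, g x := by
  have hsum := expect_le_expect (s := univ) fun x _ => h x
  rw [expect_add_distrib, expect_add_distrib, Fintype.expect_equiv e (fun x => f (e x)) f
    (fun _ => rfl), Fintype.expect_equiv e (fun x => g (e x)) g (fun _ => rfl)] at hsum
  linarith

def boolSign (b : Bool) : ℝ := if b then 1 else -1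

@[simp] lemma boolSign_true : boolSign true = 1 := rfl

@[simp] lemma boolSign_false : boolSign false = -1 := rfl

@[simp] lemma boolSign_not (b : Bool) : boolSign (!b) = -boolSign b := by
  cases b <;> simp

@[simp] lemma abs_boolSign (b : Bool) : |boolSign b| = 1 := by
  cases b <;> simp

section SignedSum

variable {M : ℕ}

def signedSum (ξ : Fin M → Bool) : (Fin M → ℝ) →ₗ[ℝ] ℝ where
  toFun v := ∑ i, boolSign (ξ i) * v i
  map_add' v w := by simp only [Pi.add_apply, mul_add, sum_add_distrib]
  map_smul' c v := by
    simp only [Pi.smul_apply, smul_eq_mul, RingHom.id_apply, mul_sum, mul_left_comm]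

variable (ξ : Fin M → Bool)

lemma signedSum_apply (v : Fin M → ℝ) : signedSum ξ v = ∑ i, boolSign (ξ i) * v i := rfl

lemma signedSum_mul_left (c : ℝ) (v : Fin M → ℝ) :
    signedSum ξ (fun i => c * v i) = c * signedSum ξ v :=
  map_smul (signedSum ξ) c v

lemma signedSum_sub (v w : Fin M → ℝ) :
    signedSum ξ (fun i => v i - w i) = signedSum ξ v - signedSum ξ w :=
  map_sub (signedSum ξ) v w

lemma signedSum_sum {κ : Type*} (s : Finset κ) (v : κ → Fin M → ℝ) :
    signedSum ξ (fun i => ∑ k ∈ s, v k i) = ∑ k ∈ s, signedSum ξ (v k) := by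
  simpa only [← Finset.sum_apply] using map_sum (signedSum ξ) v s

lemma signedSum_expect {κ : Type*} [Fintype κ] (v : κ → Fin M → ℝ) :
    signedSum ξ (fun i => 𝔼 k, v k i) = 𝔼 k, signedSum ξ (v k) := by
  simp only [Fintype.expect_eq_sum_div_card, div_eq_inv_mul, signedSum_mul_left, signedSum_sum]

lemma signedSum_not (v : Fin M → ℝ) : signedSum (fun i => !ξ i) v = -signedSum ξ v := by
  simp [signedSum_apply, sum_neg_distrib]

lemma signedSum_update (v : Fin M → ℝ) (j : Fin M) (a : ℝ) :
    signedSum ξ (Function.update v j a) =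
      signedSum ξ (Function.update v j 0) + boolSign (ξ j) * a := by
  have hsplit : Function.update v j a = Function.update v j 0 + Pi.single j a := by
    ext i
    rcases eq_or_ne i j with rfl | hij <;> simp [*]
  rw [hsplit, map_add]
  simp [signedSum_apply, Pi.single_apply]

lemma abs_signedSum_le {C : ℝ} {v : Fin M → ℝ} (hv : ∀ i, |v i| ≤ C) :
    |signedSum ξ v| ≤ M * C := by
  calc |signedSum ξ v| ≤ ∑ i, |boolSign (ξ i) * v i| := by
        rw [signedSum_apply]; exact abs_sum_le_sum_abs _ _
    _ ≤ ∑ _i : Fin M, C := sum_le_sum fun i _ => by simpa [abs_mul] using hv i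
    _ = M * C := by simp

lemma bddAbove_range_signedSum {T : Type*} {C : ℝ} {v : T → Fin M → ℝ}
    (hv : ∀ t i, |v t i| ≤ C) : BddAbove (Set.range fun t => signedSum ξ (v t)) :=
  ⟨M * C, by rintro _ ⟨t, rfl⟩; exact (le_abs_self _).trans (abs_signedSum_le ξ (hv t))⟩

lemma expect_comp_not (F : (Fin M → Bool) → ℝ) :
    𝔼 ξ : Fin M → Bool, F (fun i => !ξ i) = 𝔼 ξ, F ξ :=
  Fintype.expect_equiv (Function.Involutive.toPerm _ fun ξ => funext fun i => Bool.not_not (ξ i))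
    _ _ fun _ => rfl

end SignedSum

lemma empRad_eq_inv_mul_expect {Ω : Type*} {M : ℕ} (F : Set (Ω → ℝ)) (x : Fin M → Ω) :
    empRad F x = (M : ℝ)⁻¹ * 𝔼 ξ, sSup ((fun f => signedSum ξ (fun i => f (x i))) '' F) := by
  rw [empRad, ← inv_card_mul_sum_eq_expect]
  simp [signedSum_apply, boolSign]

section Contraction

lemma ciSup_add_ciSup_sub_le {T : Type*} [Nonempty T] {B H P : T → ℝ}
    (hPH : ∀ t t', |P t - P t'| ≤ |H t - H t'|)
    (hadd : BddAbove (Set.range fun t => B t + H t))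
    (hsub : BddAbove (Set.range fun t => B t - H t)) :
    (⨆ t, B t + P t) + (⨆ t, B t - P t) ≤ (⨆ t, B t + H t) + (⨆ t, B t - H t) := by
  refine ciSup_add_ciSup_le fun t t' => ?_
  have hP := (le_abs_self _).trans (hPH t t')
  rcases le_total (H t') (H t) with h | h
  · rw [abs_of_nonneg (sub_nonneg.2 h)] at hP
    linarith [le_ciSup hadd t, le_ciSup hsub t']
  · rw [abs_of_nonpos (sub_nonpos.2 h)] at hP
    linarith [le_ciSup hadd t', le_ciSup hsub t]

lemma abs_sub_le_of_lipschitzWith_one {φ : ℝ → ℝ} (hφ : LipschitzWith 1 φ) (a b : ℝ) :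
    |φ a - φ b| ≤ |a - b| := by
  simpa [Real.dist_eq] using hφ.dist_le_mul a b

variable {M : ℕ} {T : Type*} [Nonempty T]

lemma expect_iSup_signedSum_update_le {C : ℝ} {h : T → Fin M → ℝ} (hh : ∀ t i, |h t i| ≤ C)
    {φ : ℝ → ℝ} (hφ : LipschitzWith 1 φ) (j : Fin M) :
    𝔼 ξ, ⨆ t, signedSum ξ (Function.update (h t) j (φ (h t j))) ≤
      𝔼 ξ, ⨆ t, signedSum ξ (h t) := by
  let e : Equiv.Perm (Fin M → Bool) :=
    Function.Involutive.toPerm (fun ξ => Function.update ξ j (!ξ j)) fun ξ => by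
      ext i; rcases eq_or_ne i j with rfl | hij <;> simp [*]
  have he : ∀ ξ, e ξ = Function.update ξ j (!ξ j) := fun _ => rfl
  refine expect_le_expect_of_add_comp_perm_le e fun ξ => ?_
  -- the sign patterns `ξ` and `e ξ` share the part `B` of the sum away from `j`
  set s := boolSign (ξ j)
  set B : T → ℝ := fun t => signedSum ξ (Function.update (h t) j 0)
  have he_j : boolSign (e ξ j) = -s := by simp [he, s]
  have he_B : ∀ t, signedSum (e ξ) (Function.update (h t) j 0) = B t := by
    intro t
    simp only [B, signedSum_apply]
    refine sum_congr rfl fun i _ => ?_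
    rcases eq_or_ne i j with rfl | hij <;> simp [*]
  have split : ∀ ζ t, signedSum ζ (h t) =
      signedSum ζ (Function.update (h t) j 0) + boolSign (ζ j) * h t j := fun ζ t => by
    simpa only [Function.update_eq_self] using signedSum_update ζ (h t) j (h t j)
  have hupd : (fun t => signedSum ξ (Function.update (h t) j (φ (h t j)))) =
      fun t => B t + s * φ (h t j) := funext fun t => signedSum_update ..
  have hupd' : (fun t => signedSum (e ξ) (Function.update (h t) j (φ (h t j)))) =
      fun t => B t - s * φ (h t j) := funext fun t => by
    rw [signedSum_update, he_B, he_j, neg_mul, ← sub_eq_add_neg]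
  have horig : (fun t => signedSum ξ (h t)) = fun t => B t + s * h t j :=
    funext fun t => split ξ t
  have horig' : (fun t => signedSum (e ξ) (h t)) = fun t => B t - s * h t j := funext fun t => by
    rw [split, he_B, he_j, neg_mul, ← sub_eq_add_neg]
  have hbdd := fun ζ => bddAbove_range_signedSum ζ hh
  rw [hupd, hupd', horig, horig']
  refine ciSup_add_ciSup_sub_le (fun t t' => ?_) (horig ▸ hbdd ξ) (horig' ▸ hbdd (e ξ))
  simpa only [← mul_sub, abs_mul, abs_boolSign, one_mul, s] using
    abs_sub_le_of_lipschitzWith_one hφ (h t j) (h t' j)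

/-- **Ledoux–Talagrand contraction**. -/
theorem expect_iSup_signedSum_comp_le {C : ℝ} {h : T → Fin M → ℝ} (hh : ∀ t i, |h t i| ≤ C)
    {φ : ℝ → ℝ} (hφ : LipschitzWith 1 φ) :
    𝔼 ξ, ⨆ t, signedSum ξ (fun i => φ (h t i)) ≤ 𝔼 ξ, ⨆ t, signedSum ξ (h t) := by
  classical
  let hA : Finset (Fin M) → T → Fin M → ℝ := fun A t i => if i ∈ A then φ (h t i) else h t i
  have hA_bound : ∀ A t i, |hA A t i| ≤ |φ 0| + C := by
    intro A t i
    have hφi : |φ (h t i)| ≤ |φ 0| + |h t i| := by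
      have := (abs_sub_abs_le_abs_sub _ _).trans (abs_sub_le_of_lipschitzWith_one hφ (h t i) 0)
      rw [sub_zero] at this
      linarith
    simp only [hA]
    split_ifs
    · linarith [hh t i]
    · linarith [abs_nonneg (φ 0), hh t i]
  have key : ∀ A, 𝔼 ξ, ⨆ t, signedSum ξ (hA A t) ≤ 𝔼 ξ, ⨆ t, signedSum ξ (h t) := by
    intro A
    induction A using Finset.induction_on with
    | empty => simp [hA]
    | insert j A hj ih =>
      have hins : ∀ t, hA (insert j A) t = Function.update (hA A t) j (φ (hA A t j)) := by
        intro t; ext i; rcases eq_or_ne i j with rfl | hij <;> simp [hA, *]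
      simp only [hins]
      exact (expect_iSup_signedSum_update_le (hA_bound A) hφ j).trans ih
  simpa [hA] using key univ

end Contraction

section Massart

variable {M : ℕ}

lemma expect_exp_signedSum (v : Fin M → ℝ) :
    𝔼 ξ : Fin M → Bool, exp (signedSum ξ v) = ∏ i, cosh (v i) := by
  calc 𝔼 ξ : Fin M → Bool, exp (signedSum ξ v)
      = ∑ ξ : Fin M → Bool, ∏ i, exp (boolSign (ξ i) * v i) / 2 := by
        simp [Fintype.expect_eq_sum_div_card, signedSum_apply, exp_sum, prod_div_distrib, sum_div]
    _ = ∏ i, ∑ b : Bool, exp (boolSign b * v i) / 2 := by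
        rw [prod_univ_sum, Fintype.piFinset_univ]
    _ = ∏ i, cosh (v i) := by simp [cosh_eq, add_div]

lemma expect_exp_mul_signedSum_le {v : Fin M → ℝ} (hv : ∀ i, |v i| ≤ 1) (s : ℝ) :
    𝔼 ξ : Fin M → Bool, exp (s * signedSum ξ v) ≤ exp (s ^ 2 * M / 2) := by
  simp only [← signedSum_mul_left, expect_exp_signedSum]
  calc ∏ i, cosh (s * v i) ≤ ∏ _i : Fin M, exp (s ^ 2 / 2) := by
        refine prod_le_prod (fun i _ => (cosh_pos _).le) fun i _ => ?_
        refine (cosh_le_exp_half_sq _).trans (exp_le_exp.2 ?_)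
        have : v i ^ 2 ≤ 1 := (sq_le_one_iff_abs_le_one _).2 (hv i)
        nlinarith [sq_nonneg s]
    _ = exp (s ^ 2 * M / 2) := by
        rw [prod_const, card_univ, Fintype.card_fin, ← exp_nat_mul]; ring_nf

/-- **Massart's finite class lemma**. -/
theorem inv_mul_expect_iSup_signedSum_le (hM : 0 < M) {J : Type*} [Fintype J]
    (hJ : 1 < Fintype.card J) {v : J → Fin M → ℝ} (hv : ∀ j i, |v j i| ≤ 1) :
    (M : ℝ)⁻¹ * 𝔼 ξ, ⨆ j, signedSum ξ (v j) ≤ √(2 * log (Fintype.card J) / M) := by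
  have : Nonempty J := Fintype.card_pos_iff.1 (by omega)
  set A := 𝔼 ξ, ⨆ j, signedSum ξ (v j)
  set L := log (Fintype.card J)
  have hL : 0 < L := log_pos (by exact_mod_cast hJ)
  have hMpos : (0 : ℝ) < M := by exact_mod_cast hM
  -- Chernoff's bound at the optimal temperature `s`
  set s := √(2 * L / M)
  have hs : 0 < s := sqrt_pos.2 (by positivity)
  have hsM : s ^ 2 * M = 2 * L := by rw [sq_sqrt (by positivity)]; field_simp
  have hchernoff : exp (s * A) ≤ exp (L + s ^ 2 * M / 2) := calc
    exp (s * A) = exp (𝔼 ξ, s * ⨆ j, signedSum ξ (v j)) := by rw [mul_expect]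
    _ ≤ 𝔼 ξ, exp (s * ⨆ j, signedSum ξ (v j)) := exp_expect_le_expect_exp _
    _ ≤ 𝔼 ξ, ∑ j, exp (s * signedSum ξ (v j)) := expect_le_expect fun ξ _ => by
        obtain ⟨j₀, hj₀⟩ := exists_eq_ciSup_of_finite (f := fun j => signedSum ξ (v j))
        rw [← hj₀]
        exact single_le_sum (f := fun j => exp (s * signedSum ξ (v j)))
          (fun j _ => (exp_pos _).le) (mem_univ j₀)
    _ = ∑ j, 𝔼 ξ, exp (s * signedSum ξ (v j)) := expect_sum_comm _ _ _
    _ ≤ ∑ _j : J, exp (s ^ 2 * M / 2) :=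
        sum_le_sum fun j _ => expect_exp_mul_signedSum_le (hv j) s
    _ = exp (L + s ^ 2 * M / 2) := by
        rw [sum_const, card_univ, nsmul_eq_mul, exp_add, exp_log (by positivity)]
  have hsA : s * A ≤ s * (s * M) := by nlinarith [exp_le_exp.1 hchernoff]
  rw [inv_mul_le_iff₀ hMpos, mul_comm]
  exact le_of_mul_le_mul_left hsA hs

end Massart

section ReluNeurons

variable {M : ℕ} {ι : Type*} [Fintype ι]

abbrev L1Ball (ι : Type*) [Fintype ι] : Type _ := {p : ι → ℝ // ∑ j, |p j| ≤ 1}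

instance : Nonempty (L1Ball ι) := ⟨⟨0, by simp⟩⟩

noncomputable def reluSup (z : Fin M → ι → ℝ) (ξ : Fin M → Bool) : ℝ :=
  ⨆ p : L1Ball ι, signedSum ξ (fun i => max (p.1 ⬝ᵥ z i) 0)

lemma abs_dotProduct_le_of_abs_le_one {q y : ι → ℝ} (hy : ∀ j, |y j| ≤ 1) : |q ⬝ᵥ y| ≤ ∑ j, |q j| :=
  (abs_sum_le_sum_abs _ _).trans <| sum_le_sum fun j _ => by
    rw [abs_mul]; exact mul_le_of_le_one_right (abs_nonneg _) (hy j)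

lemma signedSum_dotProduct_le_iSup [Nonempty ι] (z : Fin M → ι → ℝ) (ξ : Fin M → Bool)
    {p : ι → ℝ} (hp : ∑ j, |p j| ≤ 1) :
    signedSum ξ (fun i => p ⬝ᵥ z i) ≤
      ⨆ v : Bool × ι, signedSum ξ (fun i => boolSign v.1 * z i v.2) := by
  set L := ⨆ v : Bool × ι, signedSum ξ (fun i => boolSign v.1 * z i v.2)
  have hbdd : BddAbove (Set.range fun v : Bool × ι =>
      signedSum ξ (fun i => boolSign v.1 * z i v.2)) := (Set.finite_range _).bddAbove
  have hcorr : ∀ j, |signedSum ξ (fun i => z i j)| ≤ L := fun j => by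
    have h₁ : signedSum ξ (fun i => boolSign true * z i j) ≤ L := le_ciSup hbdd (true, j)
    have h₂ : signedSum ξ (fun i => boolSign false * z i j) ≤ L := le_ciSup hbdd (false, j)
    simp only [boolSign_true, boolSign_false, signedSum_mul_left] at h₁ h₂
    exact abs_le.2 ⟨by linarith, by linarith⟩
  have hL : 0 ≤ L := (abs_nonneg _).trans (hcorr (Classical.arbitrary ι))
  calc signedSum ξ (fun i => p ⬝ᵥ z i) = ∑ j, p j * signedSum ξ (fun i => z i j) := by
        simp only [dotProduct, signedSum_sum, signedSum_mul_left]
    _ ≤ ∑ j, |p j| * L := sum_le_sum fun j _ => (le_abs_self _).trans <| by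
        rw [abs_mul]; exact mul_le_mul_of_nonneg_left (hcorr j) (abs_nonneg _)
    _ = (∑ j, |p j|) * L := (sum_mul ..).symm
    _ ≤ L := mul_le_of_le_one_left hL hp

variable {z : Fin M → ι → ℝ}

lemma bddAbove_range_signedSum_relu (hz : ∀ i j, |z i j| ≤ 1) (ξ : Fin M → Bool) :
    BddAbove (Set.range fun p : L1Ball ι => signedSum ξ (fun i => max (p.1 ⬝ᵥ z i) 0)) :=
  bddAbove_range_signedSum ξ (C := 1) fun p i => by
    rw [abs_of_nonneg (le_max_right _ _)]
    exact max_le ((le_abs_self _).trans ((abs_dotProduct_le_of_abs_le_one (hz i)).trans p.2)) zero_le_one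

lemma reluSup_nonneg (hz : ∀ i j, |z i j| ≤ 1) (ξ : Fin M → Bool) : 0 ≤ reluSup z ξ := by
  simpa [reluSup, signedSum_apply] using
    le_ciSup (bddAbove_range_signedSum_relu hz ξ) ⟨0, by simp⟩

lemma signedSum_relu_le_mul_reluSup (hz : ∀ i j, |z i j| ≤ 1) (ξ : Fin M → Bool) (q : ι → ℝ) :
    signedSum ξ (fun i => max (q ⬝ᵥ z i) 0) ≤ (∑ j, |q j|) * reluSup z ξ := by
  set r := ∑ j, |q j|
  rcases (sum_nonneg fun j _ => abs_nonneg (q j) : 0 ≤ r).eq_or_lt with hr | hr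
  · have hq : q = 0 := funext fun j =>
      abs_eq_zero.1 ((sum_eq_zero_iff_of_nonneg fun j _ => abs_nonneg (q j)).1 hr.symm j
        (mem_univ j))
    subst hq
    simp [signedSum_apply, r]
  · let p : L1Ball ι := ⟨r⁻¹ • q, by
      simp [abs_mul, abs_of_pos hr, ← mul_sum, r, inv_mul_cancel₀ hr.ne']⟩
    have hscale : ∀ i, max (q ⬝ᵥ z i) 0 = r * max (p.1 ⬝ᵥ z i) 0 := fun i => by
      rw [mul_max_of_nonneg _ _ hr.le, mul_zero, smul_dotProduct, smul_eq_mul,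
        mul_inv_cancel_left₀ hr.ne']
    simp only [hscale, signedSum_mul_left]
    exact mul_le_mul_of_nonneg_left (le_ciSup (bddAbove_range_signedSum_relu hz ξ) p) hr.le

noncomputable def reluSupSymm (z : Fin M → ι → ℝ) (ξ : Fin M → Bool) : ℝ :=
  reluSup z ξ + reluSup z (fun i => !ξ i)

lemma reluSupSymm_nonneg (hz : ∀ i j, |z i j| ≤ 1) (ξ : Fin M → Bool) : 0 ≤ reluSupSymm z ξ :=
  add_nonneg (reluSup_nonneg hz _) (reluSup_nonneg hz _)

lemma mul_signedSum_relu_le (hz : ∀ i j, |z i j| ≤ 1) (ξ : Fin M → Bool) (c : ℝ) (q : ι → ℝ) :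
    c * signedSum ξ (fun i => max (q ⬝ᵥ z i) 0) ≤ |c| * (∑ j, |q j|) * reluSupSymm z ξ := by
  rw [reluSupSymm]
  have h₁ := signedSum_relu_le_mul_reluSup hz ξ q
  have h₂ := signedSum_relu_le_mul_reluSup hz (fun i => !ξ i) q
  rw [signedSum_not] at h₂
  have hr : 0 ≤ ∑ j, |q j| := by positivity
  have hR₁ := reluSup_nonneg hz ξ
  have hR₂ := reluSup_nonneg hz (fun i => !ξ i)
  rcases le_total 0 c with hc | hc
  · rw [abs_of_nonneg hc]
    nlinarith [mul_nonneg hc hr, mul_nonneg (mul_nonneg hc hr) hR₂]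
  · rw [abs_of_nonpos hc]
    nlinarith [mul_nonneg (neg_nonneg.2 hc) hr, mul_nonneg (mul_nonneg (neg_nonneg.2 hc) hr) hR₁]

theorem inv_mul_expect_reluSup_le (hM : 0 < M) [Nonempty ι] (hz : ∀ i j, |z i j| ≤ 1) :
    (M : ℝ)⁻¹ * 𝔼 ξ, reluSup z ξ ≤ √(2 * log (2 * Fintype.card ι) / M) := by
  have hlin : ∀ (p : L1Ball ι) i, |p.1 ⬝ᵥ z i| ≤ 1 := fun p i =>
    (abs_dotProduct_le_of_abs_le_one (hz i)).trans p.2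
  have hcontr := expect_iSup_signedSum_comp_le hlin (LipschitzWith.id.max_const 0)
  have hvert : ∀ ξ, (⨆ p : L1Ball ι, signedSum ξ (fun i => p.1 ⬝ᵥ z i)) ≤
      ⨆ v : Bool × ι, signedSum ξ (fun i => boolSign v.1 * z i v.2) := fun ξ =>
    ciSup_le fun p => signedSum_dotProduct_le_iSup z ξ p.2
  have hmassart := inv_mul_expect_iSup_signedSum_le hM (J := Bool × ι)
    (v := fun v i => boolSign v.1 * z i v.2)
    (by simp only [Fintype.card_prod, Fintype.card_bool]; have := Fintype.card_pos (α := ι); omega)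
    (fun v i => by simp [abs_mul, hz])
  calc (M : ℝ)⁻¹ * 𝔼 ξ, reluSup z ξ
      ≤ (M : ℝ)⁻¹ * 𝔼 ξ, ⨆ v : Bool × ι, signedSum ξ (fun i => boolSign v.1 * z i v.2) := by
        refine mul_le_mul_of_nonneg_left ?_ (by positivity)
        exact hcontr.trans (expect_le_expect fun ξ _ => hvert ξ)
    _ ≤ √(2 * log (2 * Fintype.card ι) / M) := by
        simpa [Fintype.card_prod] using hmassart

lemma inv_mul_expect_reluSupSymm_le (hM : 0 < M) [Nonempty ι] (hz : ∀ i j, |z i j| ≤ 1) :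
    (M : ℝ)⁻¹ * 𝔼 ξ, reluSupSymm z ξ ≤ 2 * √(2 * log (2 * Fintype.card ι) / M) := by
  simp only [reluSupSymm, expect_add_distrib, expect_comp_not (reluSup z)]
  linarith [inv_mul_expect_reluSup_le hM hz]

end ReluNeurons

section Networks

variable {M : ℕ} (ξ : Fin M → Bool)

lemma mul_signedSum_le_of_reluApprox {σ : ℝ → ℝ} {K : ℕ} {abar wbar bbar : Fin K → ℝ} {ε : ℝ}
    (happ : ∀ t, |σ t - ∑ k, abar k * max (wbar k * t + bbar k) 0| ≤ ε) (c : ℝ) (u : Fin M → ℝ) :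
    c * signedSum ξ (fun i => σ (u i)) ≤
      |c| * (M * ε) + ∑ k, c * abar k * signedSum ξ (fun i => max (wbar k * u i + bbar k) 0) := by
  have herr : |signedSum ξ (fun i => σ (u i) - ∑ k, abar k * max (wbar k * u i + bbar k) 0)| ≤
      M * ε := abs_signedSum_le ξ fun i => happ (u i)
  simp only [signedSum_sub, signedSum_sum, signedSum_mul_left] at herr
  have hc := (le_abs_self _).trans ((abs_mul c _).trans_le
    (mul_le_mul_of_nonneg_left herr (abs_nonneg c)))
  rw [mul_sub, mul_sum] at hc
  simp only [mul_assoc]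
  linarith

/-- Appending a constant coordinate `1` absorbs the bias of a neuron into its weights. -/
def augment {κ : Type*} (y : κ → ℝ) : Option κ → ℝ := fun o => o.elim 1 y

lemma abs_augment_le {κ : Type*} {y : κ → ℝ} (hy : ∀ j, |y j| ≤ 1) (o : Option κ) :
    |augment y o| ≤ 1 := by
  cases o <;> simp [augment, hy]

lemma mul_signedSum_neuron_le {d : ℕ} {y : Fin M → Fin d → ℝ} (hy : ∀ i j, |y i j| ≤ 1)
    {σ : ℝ → ℝ} {K : ℕ} {abar wbar bbar : Fin K → ℝ} {ε γ : ℝ}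
    (happ : ∀ t, |σ t - ∑ k, abar k * max (wbar k * t + bbar k) 0| ≤ ε)
    (hγ : ∑ k, |abar k| * (|wbar k| + |bbar k|) ≤ γ) (a : ℝ) (w : Fin d → ℝ) (b : ℝ) :
    a * signedSum ξ (fun i => σ (w ⬝ᵥ y i + b)) ≤
      |a| * (M * ε) +
        γ * (|a| * (∑ j, |w j| + |b| + 1)) * reluSupSymm (fun i => augment (y i)) ξ := by
  set z := fun i => augment (y i)
  have hz : ∀ i o, |z i o| ≤ 1 := fun i => abs_augment_le (hy i)
  have hN := reluSupSymm_nonneg hz ξ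
  set W := ∑ j, |w j| + |b| + 1
  have hW : 0 ≤ W := by positivity
  -- the `k`-th ReLU of the approximant, composed with the affine map, is a ReLU neuron in `z`
  let q : Fin K → Option (Fin d) → ℝ := fun k o =>
    o.elim (wbar k * b + bbar k) fun j => wbar k * w j
  have hq : ∀ k i, wbar k * (w ⬝ᵥ y i + b) + bbar k = q k ⬝ᵥ z i := by
    intro k i
    simp [dotProduct, Fintype.sum_option, q, z, augment, mul_sum, mul_add, mul_assoc]
    ring
  have hq_norm : ∀ k, ∑ o, |q k o| ≤ (|wbar k| + |bbar k|) * W := by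
    intro k
    simp only [Fintype.sum_option, q, Option.elim, abs_mul, ← mul_sum]
    have := abs_add_le (wbar k * b) (bbar k)
    rw [abs_mul] at this
    nlinarith [abs_nonneg (wbar k), abs_nonneg (bbar k), abs_nonneg b,
      sum_nonneg fun j (_ : j ∈ univ) => abs_nonneg (w j)]
  calc a * signedSum ξ (fun i => σ (w ⬝ᵥ y i + b))
      ≤ |a| * (M * ε) + ∑ k, a * abar k * signedSum ξ (fun i => max (q k ⬝ᵥ z i) 0) := by
        simpa only [hq] using mul_signedSum_le_of_reluApprox ξ happ a (fun i => w ⬝ᵥ y i + b)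
    _ ≤ |a| * (M * ε) + ∑ k, |abar k| * (|wbar k| + |bbar k|) * (|a| * W * reluSupSymm z ξ) := by
        gcongr (_ + ?_)
        refine sum_le_sum fun k _ => ?_
        calc _ ≤ |a * abar k| * (∑ o, |q k o|) * reluSupSymm z ξ :=
              mul_signedSum_relu_le hz ξ _ _
          _ ≤ |a * abar k| * ((|wbar k| + |bbar k|) * W) * reluSupSymm z ξ := by
              gcongr; exact hq_norm k
          _ = _ := by rw [abs_mul]; ring
    _ ≤ |a| * (M * ε) + γ * (|a| * W) * reluSupSymm z ξ := by
        rw [← sum_mul, mul_assoc γ]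
        gcongr

end Networks

section SigmaClass

variable {d M : ℕ} {G : Type*} [Group G] [Fintype G] [MulAction G (Fin d → ℝ)]

lemma signedSum_averagedNetwork {m : ℕ} (a : Fin m → ℝ) (w : Fin m → Fin d → ℝ) (b : Fin m → ℝ)
    (σ : ℝ → ℝ) (x : Fin M → Fin d → ℝ) (ξ : Fin M → Bool) :
    signedSum ξ (fun i => (m : ℝ)⁻¹ * ∑ n, a n * ((Fintype.card G : ℝ)⁻¹ *
      ∑ g : G, σ ((∑ j, w n j * (g • x i) j) + b n))) =
      𝔼 n, 𝔼 g : G, a n * signedSum ξ (fun i => σ (w n ⬝ᵥ (g • x i) + b n)) := by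
  have hm : ∀ F : Fin m → ℝ, (m : ℝ)⁻¹ * ∑ n, F n = 𝔼 n, F n := fun F => by
    simpa using inv_card_mul_sum_eq_expect F
  simp only [hm, inv_card_mul_sum_eq_expect, signedSum_expect, signedSum_mul_left, mul_expect]
  rfl

lemma signedSum_le_of_mem_sigmaClassG {σ : ℝ → ℝ} {γ Q : ℝ}
    (hσ : ∀ ε > (0 : ℝ), ∃ (K : ℕ) (abar wbar bbar : Fin K → ℝ),
      (∀ t : ℝ, |σ t - ∑ k, abar k * max (wbar k * t + bbar k) 0| ≤ ε) ∧
      (∑ k, |abar k| * (|wbar k| + |bbar k|)) ≤ γ) (hγ : 0 ≤ γ) (hQ : 0 ≤ Q)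
    {x : Fin M → Fin d → ℝ} (hx : ∀ (g : G) i j, |(g • x i) j| ≤ 1)
    {f : (Fin d → ℝ) → ℝ} (hf : f ∈ sigmaClassG G σ Q) (ξ : Fin M → Bool) :
    signedSum ξ (fun i => f (x i)) ≤
      γ * Q * 𝔼 g : G, reluSupSymm (fun i => augment (g • x i)) ξ := by
  obtain ⟨m, hm, a, w, b, hpath, rfl⟩ := hf
  have : Nonempty (Fin m) := ⟨⟨0, hm⟩⟩
  set N : G → ℝ := fun g => reluSupSymm (fun i => augment (g • x i)) ξ
  have hN : 0 ≤ 𝔼 g, N g := expect_nonneg fun g _ =>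
    reluSupSymm_nonneg (fun i => abs_augment_le (hx g i)) ξ
  set W : Fin m → ℝ := fun n => ∑ j, |w n j| + |b n| + 1
  have haW : 𝔼 n, |a n| * W n ≤ Q := expect_le_of_expect_sq_le hQ (by
    simpa [← inv_card_mul_sum_eq_expect] using hpath)
  have ha : 𝔼 n, |a n| ≤ Q := (expect_le_expect fun n _ =>
    le_mul_of_one_le_right (abs_nonneg _) (le_add_of_nonneg_left (by positivity))).trans haW
  refine le_of_forall_pos_le_add fun ε hε => ?_
  obtain ⟨K, abar, wbar, bbar, happ, hγK⟩ := hσ (ε / (Q * M + 1)) (by positivity)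
  calc _ = 𝔼 n, 𝔼 g : G, a n * signedSum ξ (fun i => σ (w n ⬝ᵥ (g • x i) + b n)) :=
        signedSum_averagedNetwork a w b σ x ξ
    _ ≤ 𝔼 n, 𝔼 g : G, (|a n| * (M * (ε / (Q * M + 1))) + γ * (|a n| * W n) * N g) :=
        expect_le_expect fun n _ => expect_le_expect fun g _ =>
          mul_signedSum_neuron_le ξ (hx g) happ hγK (a n) (w n) (b n)
    _ = (𝔼 n, |a n|) * (M * (ε / (Q * M + 1))) + γ * (𝔼 n, |a n| * W n) * 𝔼 g, N g := by
        simp only [expect_add_distrib, Fintype.expect_const, ← mul_expect, ← expect_mul]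
    _ ≤ Q * (M * (ε / (Q * M + 1))) + γ * Q * 𝔼 g, N g := by gcongr
    _ ≤ γ * Q * 𝔼 g, N g + ε := by
        have : Q * (M * (ε / (Q * M + 1))) ≤ ε := by
          rw [← mul_assoc, mul_div_assoc', div_le_iff₀ (by positivity)]
          nlinarith
        linarith

end SigmaClass

theorem empRad_sigmaClassG_bound_general {d M : ℕ} (hM : 0 < M)
    {G : Type*} [Group G] [Fintype G] [MulAction G (Fin d → ℝ)]
    (Ω : Set (Fin d → ℝ))
    (hΩ : ∀ (g : G), ∀ z ∈ Ω, ∀ i, |(g • z) i| ≤ 1)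
    (σ : ℝ → ℝ) (γ : ℝ) (hγ : 0 ≤ γ)
    (hσ : ∀ ε > (0 : ℝ), ∃ (K : ℕ) (abar wbar bbar : Fin K → ℝ),
      (∀ t : ℝ, |σ t - ∑ k, abar k * max (wbar k * t + bbar k) 0| ≤ ε) ∧
      (∑ k, |abar k| * (|wbar k| + |bbar k|)) ≤ γ)
    (Q : ℝ) (hQ : 0 ≤ Q)
    (x : Fin M → Fin d → ℝ) (hx : ∀ i, x i ∈ Ω) :
    empRad (sigmaClassG G σ Q) x ≤
      4 * γ * Q * Real.sqrt (Real.log (2 * d + 2) / M) := by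
  have hgx : ∀ (g : G) i j, |(g • x i) j| ≤ 1 := fun g i j => hΩ g (x i) (hx i) j
  set N : G → (Fin M → Bool) → ℝ := fun g => reluSupSymm (fun i => augment (g • x i))
  have hN : ∀ g, (M : ℝ)⁻¹ * 𝔼 ξ, N g ξ ≤ 2 * √(2 * log (2 * d + 2) / M) := fun g => by
    simpa [mul_add] using inv_mul_expect_reluSupSymm_le hM fun i => abs_augment_le (hgx g i)
  have hsqrt : √(2 * log (2 * d + 2) / M) ≤ 2 * √(log (2 * d + 2) / M) := by
    rw [mul_div_assoc, sqrt_mul zero_le_two]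
    gcongr
    rw [sqrt_le_left zero_le_two]; norm_num
  calc empRad (sigmaClassG G σ Q) x
      = (M : ℝ)⁻¹ * 𝔼 ξ, sSup ((fun f => signedSum ξ (fun i => f (x i))) '' sigmaClassG G σ Q) :=
        empRad_eq_inv_mul_expect _ _
    _ ≤ (M : ℝ)⁻¹ * 𝔼 ξ, γ * Q * 𝔼 g, N g ξ := by
        gcongr with ξ
        refine Real.sSup_le ?_ (mul_nonneg (mul_nonneg hγ hQ) (expect_nonneg fun g _ =>
          reluSupSymm_nonneg (fun i => abs_augment_le (hgx g i)) ξ))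
        rintro _ ⟨f, hf, rfl⟩
        exact signedSum_le_of_mem_sigmaClassG hσ hγ hQ hgx hf ξ
    _ = γ * Q * 𝔼 g, (M : ℝ)⁻¹ * 𝔼 ξ, N g ξ := by
        simp only [← mul_expect]; rw [expect_comm]; ring
    _ ≤ γ * Q * (2 * (2 * √(log (2 * d + 2) / M))) := by
        gcongr; exact expect_le univ_nonempty fun g _ => (hN g).trans (by gcongr)
    _ = 4 * γ * Q * √(log (2 * d + 2) / M) := by ring

/-- Rademacher bound for `G`-averaged shallow networks with an activation `σ`
uniformly approximable by ReLU combinations of path norm at most `γ`: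
`R̂_S(ℱ_Q) ≤ 4 γ Q √(log(2d+2)/M)`. -/
theorem empRad_sigmaClassG_bound {d M : ℕ} (hM : 0 < M)
    {G : Type*} [Group G] [Fintype G] [MulAction G (Fin d → ℝ)]
    (hlin : ∀ g : G, IsLinearMap ℝ (fun z : Fin d → ℝ => g • z))
    (Ω : Set (Fin d → ℝ))
    (hΩball : ∀ z ∈ Ω, ∀ i, |z i| ≤ 1)
    (hΩ : ∀ (g : G), ∀ z ∈ Ω, ∀ i, |(g • z) i| ≤ 1)
    (σ : ℝ → ℝ) (γ : ℝ) (hγ : 0 ≤ γ)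
    (hσ : ∀ ε > (0 : ℝ), ∃ (K : ℕ) (abar wbar bbar : Fin K → ℝ),
      (∀ t : ℝ, |σ t - ∑ k, abar k * max (wbar k * t + bbar k) 0| ≤ ε) ∧
      (∑ k, |abar k| * (|wbar k| + |bbar k|)) ≤ γ)
    (Q : ℝ) (hQ : 0 ≤ Q)
    (x : Fin M → Fin d → ℝ) (hx : ∀ i, x i ∈ Ω) :
    empRad (sigmaClassG G σ Q) x ≤
      4 * γ * Q * Real.sqrt (Real.log (2 * d + 2) / M) :=
  empRad_sigmaClassG_bound_general hM Ω hΩ σ γ hγ hσ Q hQ x hx
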